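/- arXiv:2007.16134 — 6 statements merged into one kernel-verified Lean document; each statement's English description precedes it below -/
import Mathlib

section
/- Let α ∈ (0,1), T > 0, and assume E_{α,1}(-z) satisfies the two-sided bound 1/(1+Γ(1-α)z) ≤ E_{α,1}(-z) ≤ 1/(1+z/Γ(1+α)) for z ≥ 0. Then there is a constant c (depending only on α and T) such that for every λ ≥ 0 and every t ∈ (0,T], E_{α,1}(-λ t^α)/E_{α,1}(-λ T^α) ≤ c · t^{-α}. -/
/-- The one-parameter Mittag-Leffler function `E_{α,1}(z) = ∑_{k=0}^∞ z^k / Γ(kα+1)`. -/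
noncomputable def mittagLeffler (α z : ℝ) : ℝ :=
  ∑' k : ℕ, z ^ k / Real.Gamma (k * α + 1)

theorem mittagLeffler_ratio_bound (α T : ℝ) (hα : α ∈ Set.Ioo (0 : ℝ) 1) (hT : 0 < T)
    (hE : ∀ z : ℝ, 0 ≤ z →
      1 / (1 + Real.Gamma (1 - α) * z) ≤ mittagLeffler α (-z) ∧
      mittagLeffler α (-z) ≤ 1 / (1 + z / Real.Gamma (1 + α))) :
    ∃ c : ℝ, 0 < c ∧ ∀ lam : ℝ, 0 ≤ lam → ∀ t : ℝ, t ∈ Set.Ioc (0 : ℝ) T →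
      mittagLeffler α (-(lam * t ^ α)) / mittagLeffler α (-(lam * T ^ α)) ≤ c * t ^ (-α) := by
  obtain ⟨hα0, hα1⟩ := hα
  have hg1 : 0 < Real.Gamma (1 - α) := Real.Gamma_pos_of_pos (by linarith)
  have hg2 : 0 < Real.Gamma (1 + α) := Real.Gamma_pos_of_pos (by linarith)
  have hTα : 0 < T ^ α := Real.rpow_pos_of_pos hT α
  refine ⟨T ^ α * max 1 (Real.Gamma (1 - α) * Real.Gamma (1 + α)), by positivity, ?_⟩
  intro lam hlam t ht
  obtain ⟨ht0, htT⟩ := ht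
  set c := T ^ α * max 1 (Real.Gamma (1 - α) * Real.Gamma (1 + α)) with hc
  have htα : 0 < t ^ α := Real.rpow_pos_of_pos ht0 α
  have htTα : t ^ α ≤ T ^ α := Real.rpow_le_rpow ht0.le htT hα0.le
  have hzt : 0 ≤ lam * t ^ α := by positivity
  have hzT : 0 ≤ lam * T ^ α := by positivity
  obtain ⟨_, hu1⟩ := hE _ hzt
  obtain ⟨hl2, _⟩ := hE _ hzT
  have hd1 : 0 < 1 + Real.Gamma (1 - α) * (lam * T ^ α) := by positivity
  have hd2 : 0 < 1 + lam * t ^ α / Real.Gamma (1 + α) := by positivity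
  have hpos2 : 0 < mittagLeffler α (-(lam * T ^ α)) :=
    lt_of_lt_of_le (by positivity) hl2
  have key : mittagLeffler α (-(lam * t ^ α)) / mittagLeffler α (-(lam * T ^ α))
      ≤ (1 + Real.Gamma (1 - α) * (lam * T ^ α)) / (1 + lam * t ^ α / Real.Gamma (1 + α)) := by
    calc mittagLeffler α (-(lam * t ^ α)) / mittagLeffler α (-(lam * T ^ α))
        ≤ (1 / (1 + lam * t ^ α / Real.Gamma (1 + α))) /
            (1 / (1 + Real.Gamma (1 - α) * (lam * T ^ α))) :=
          div_le_div₀ (by positivity) hu1 (by positivity) hl2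
      _ = (1 + Real.Gamma (1 - α) * (lam * T ^ α)) /
            (1 + lam * t ^ α / Real.Gamma (1 + α)) := by
          field_simp
  refine key.trans ?_
  rw [div_le_iff₀ hd2]
  have htneg : t ^ (-α) = (t ^ α)⁻¹ := by
    rw [Real.rpow_neg ht0.le]
  have hinv : (T ^ α)⁻¹ ≤ (t ^ α)⁻¹ := by
    exact inv_anti₀ htα htTα
  have h1 : 1 ≤ c * t ^ (-α) := by
    rw [htneg, hc]
    calc (1:ℝ) = T ^ α * 1 * (T ^ α)⁻¹ := by field_simp
      _ ≤ T ^ α * max 1 (Real.Gamma (1 - α) * Real.Gamma (1 + α)) * (t ^ α)⁻¹ := by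
          apply mul_le_mul _ hinv (by positivity) (by positivity)
          exact mul_le_mul_of_nonneg_left (le_max_left _ _) hTα.le
  have h2 : Real.Gamma (1 - α) * T ^ α * lam ≤ c * t ^ (-α) * (lam * t ^ α / Real.Gamma (1 + α)) := by
    rw [htneg, hc]
    have : T ^ α * max 1 (Real.Gamma (1 - α) * Real.Gamma (1 + α)) * (t ^ α)⁻¹ *
        (lam * t ^ α / Real.Gamma (1 + α)) =
        (T ^ α * max 1 (Real.Gamma (1 - α) * Real.Gamma (1 + α)) / Real.Gamma (1 + α)) * lam := by
      field_simp
    rw [this]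
    apply mul_le_mul_of_nonneg_right _ hlam
    rw [le_div_iff₀ hg2]
    calc Real.Gamma (1 - α) * T ^ α * Real.Gamma (1 + α)
        = T ^ α * (Real.Gamma (1 - α) * Real.Gamma (1 + α)) := by ring
      _ ≤ T ^ α * max 1 (Real.Gamma (1 - α) * Real.Gamma (1 + α)) :=
          mul_le_mul_of_nonneg_left (le_max_right _ _) hTα.le
  have := add_le_add h1 h2
  nlinarith [this]
end

section
/- Let X be a Hilbert space with orthonormal basis {φ_j} and positive numbers {λ_j}. For γ > 0 define the bounded linear map R_γ on X by R_γ(∑ a_j φ_j) = ∑ (γ/(γ + m_j)) a_j φ_j, where m_j = E_{α,1}(-λ_j T^α) ∈ (0,1]. If u₀ ∈ X, then ‖R_γ u₀‖ → 0 as γ → 0⁺. -/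
/-- Convergence (without rate) of the quasi-boundary value regularization at `t = 0`:
the norm of `R_γ u₀`, computed in the orthonormal basis coordinates as
`‖R_γ u₀‖ = (∑_j (γ/(γ+m_j))² ⟨u₀,φ_j⟩²)^{1/2}`, tends to `0` as `γ → 0⁺`. -/
theorem quasi_boundary_regularization_convergence
    {X : Type*} [NormedAddCommGroup X] [InnerProductSpace ℝ X] [CompleteSpace X]
    (φ : HilbertBasis ℕ ℝ X) (α T : ℝ) (hα : α ∈ Set.Ioo (0 : ℝ) 1) (hT : 0 < T)
    (lam : ℕ → ℝ) (hlam : ∀ j, 0 < lam j)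
    (m : ℕ → ℝ) (hm_def : ∀ j, m j = mittagLeffler α (-(lam j * T ^ α)))
    (hm : ∀ j, m j ∈ Set.Ioc (0 : ℝ) 1) (u₀ : X) :
    Filter.Tendsto
      (fun γ : ℝ => Real.sqrt (∑' j : ℕ, (γ / (γ + m j)) ^ 2 * (φ.repr u₀ j) ^ 2))
      (nhdsWithin 0 (Set.Ioi 0)) (nhds 0) := by
  have hmpos : ∀ j, 0 < m j := fun j => (hm j).1
  set c : ℕ → ℝ := fun j => (φ.repr u₀ j) ^ 2 with hc
  have hsum : Summable c := by
    have := (lp.memℓp (φ.repr u₀)).summable (p := 2) (by norm_num)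
    simp only [Real.norm_eq_abs, ENNReal.toReal_ofNat, Real.rpow_two] at this
    exact this.congr fun i => sq_abs _
  have hmain : Filter.Tendsto
      (fun γ : ℝ => ∑' j : ℕ, (γ / (γ + m j)) ^ 2 * (φ.repr u₀ j) ^ 2)
      (nhdsWithin 0 (Set.Ioi 0)) (nhds 0) := by
    have h := tendsto_tsum_of_dominated_convergence
      (𝓕 := nhdsWithin (0:ℝ) (Set.Ioi 0))
      (f := fun γ j => (γ / (γ + m j)) ^ 2 * (φ.repr u₀ j) ^ 2)
      (g := fun _ => (0:ℝ)) (bound := c) hsum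
      (fun j => by
        have hcont : Filter.Tendsto (fun γ : ℝ => (γ / (γ + m j)) ^ 2 * (φ.repr u₀ j) ^ 2)
            (nhds 0) (nhds ((0 / (0 + m j)) ^ 2 * (φ.repr u₀ j) ^ 2)) := by
          apply Filter.Tendsto.mul_const
          apply Filter.Tendsto.pow
          exact Filter.Tendsto.div Filter.tendsto_id (Filter.tendsto_id.add tendsto_const_nhds)
            (by simpa using (hmpos j).ne')
        simpa using hcont.mono_left nhdsWithin_le_nhds)
      (by
        filter_upwards [self_mem_nhdsWithin] with γ (hγ : 0 < γ) j
        have h1 : γ / (γ + m j) ≤ 1 :=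
          div_le_one_of_le₀ (by linarith [hmpos j]) (by linarith [hmpos j])
        have h0 : 0 ≤ γ / (γ + m j) := div_nonneg hγ.le (by linarith [hmpos j])
        have : (γ / (γ + m j)) ^ 2 ≤ 1 := by nlinarith
        calc ‖(γ / (γ + m j)) ^ 2 * (φ.repr u₀ j) ^ 2‖
            = (γ / (γ + m j)) ^ 2 * (φ.repr u₀ j) ^ 2 := by
              rw [Real.norm_eq_abs, abs_of_nonneg (by positivity)]
          _ ≤ 1 * (φ.repr u₀ j) ^ 2 := by
              exact mul_le_mul_of_nonneg_right this (sq_nonneg _)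
          _ = c j := by simp [c])
    simpa using h
  have := (Real.continuous_sqrt.tendsto 0).comp hmain
  simpa [Function.comp_def] using this
end

section
/- Let α ∈ (0,1), τ > 0 and δ_τ(ξ) = (1−ξ)/τ. Fix θ ∈ (π/2,π). There exists c > 0 independent of τ such that for all z ≠ 0 with |arg z| ≤ θ and |Im z| ≤ π/τ, |δ_τ(e^{-zτ})^α − z^α| ≤ c τ |z|^{1+α}. -/
open Complex

private lemma aux_g_sub_one {w : ℂ} (hw : w ≠ 0) (h1 : ‖w‖ ≤ 1) :
    ‖(1 - Complex.exp (-w)) / w - 1‖ ≤ ‖w‖ := by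
  have h : (1 - Complex.exp (-w)) / w - 1 = -((Complex.exp (-w) - 1 - (-w)) / w) := by
    field_simp
    ring
  rw [h, norm_neg, norm_div]
  have h2 : ‖Complex.exp (-w) - 1 - (-w)‖ ≤ ‖w‖ ^ 2 := by
    have := Complex.norm_exp_sub_one_sub_id_le (x := -w) (by simpa using h1)
    simpa using this
  have hw0 : 0 < ‖w‖ := norm_pos_iff.mpr hw
  rw [div_le_iff₀ hw0]
  nlinarith

private lemma aux_ne_one {w : ℂ} (hw : w ≠ 0) (him : |w.im| ≤ Real.pi) :
    Complex.exp (-w) ≠ 1 := by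
  intro h
  obtain ⟨n, hn⟩ := Complex.exp_eq_one_iff.mp h
  have him2 : -w.im = (n : ℝ) * (2 * Real.pi) := by
    have := congrArg Complex.im hn
    simpa [Complex.mul_im] using this
  have hn0 : n = 0 := by
    by_contra h0
    have h1 : (1 : ℝ) ≤ |(n : ℝ)| := by
      exact_mod_cast Int.one_le_abs h0
    have h2 : 2 * Real.pi ≤ |w.im| := by
      have he : |(-w.im)| = |(n : ℝ)| * (2 * Real.pi) := by
        rw [him2, abs_mul, abs_of_pos (show (0:ℝ) < 2 * Real.pi by positivity)]
      rw [abs_neg] at he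
      nlinarith [Real.pi_pos]
    linarith [Real.pi_pos]
  rw [hn0] at hn
  simp at hn
  exact hw (by simpa [neg_eq_zero] using hn)

private lemma aux_re_lower {θ : ℝ} (hθ1 : Real.pi / 2 < θ) (hθ2 : θ < Real.pi) {w : ℂ}
    (hw : w ≠ 0) (harg : |Complex.arg w| ≤ θ) (him : |w.im| ≤ Real.pi) :
    -(Real.pi / Real.sin (Real.pi - θ)) ≤ w.re := by
  have hπ := Real.pi_pos
  set β := Real.pi - θ with hβdef
  have hβ0 : 0 < β := by simp only [hβdef]; linarith
  have hβ2 : β < Real.pi / 2 := by simp only [hβdef]; linarith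
  have hs0 : 0 < Real.sin β := Real.sin_pos_of_pos_of_lt_pi hβ0 (by linarith)
  rcases le_or_gt 0 w.re with h | h
  · have h0 : 0 ≤ Real.pi / Real.sin β := by positivity
    linarith
  have habs : 0 < ‖w‖ := norm_pos_iff.mpr hw
  have hb : |(-w).im / ‖w‖| ≤ 1 := by
    rw [abs_div, abs_of_pos habs, div_le_one habs]
    calc |(-w).im| ≤ ‖-w‖ := Complex.abs_im_le_norm _
      _ = ‖w‖ := norm_neg _
  have hmem : (-w).im / ‖w‖ ∈ Set.Icc (-1 : ℝ) 1 := abs_le.mp hb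
  have hclaim : ‖w‖ ≤ Real.pi / Real.sin β := by
    rcases le_or_gt 0 w.im with hi | hi
    · have hargEq : Complex.arg w = Real.arcsin ((-w).im / ‖w‖) + Real.pi :=
        Complex.arg_of_re_neg_of_im_nonneg h hi
      have h1 : Real.arcsin ((-w).im / ‖w‖) ≤ -β := by
        have h2 := (abs_le.mp harg).2
        rw [hargEq] at h2
        simp only [hβdef]
        linarith
      have h2 : (-w).im / ‖w‖ ≤ Real.sin (-β) :=
        (Real.arcsin_le_iff_le_sin hmem ⟨by linarith, by linarith⟩).mp h1
      rw [Real.sin_neg] at h2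
      have h3 : ‖w‖ * Real.sin β ≤ w.im := by
        have h4 := (div_le_iff₀ habs).mp h2
        simp only [Complex.neg_im] at h4
        nlinarith
      have h4 : w.im ≤ Real.pi := (abs_le.mp him).2
      rw [le_div_iff₀ hs0]
      nlinarith
    · have hargEq : Complex.arg w = Real.arcsin ((-w).im / ‖w‖) - Real.pi :=
        Complex.arg_of_re_neg_of_im_neg h hi
      have h1 : β ≤ Real.arcsin ((-w).im / ‖w‖) := by
        have h2 := (abs_le.mp harg).1
        rw [hargEq] at h2
        simp only [hβdef]
        linarith
      have h2 : Real.sin β ≤ (-w).im / ‖w‖ :=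
        (Real.le_arcsin_iff_sin_le ⟨by linarith, by linarith⟩ hmem).mp h1
      have h3 : ‖w‖ * Real.sin β ≤ -w.im := by
        have h4 := (le_div_iff₀ habs).mp h2
        simp only [Complex.neg_im] at h4
        nlinarith
      have h4 : -Real.pi ≤ w.im := (abs_le.mp him).1
      rw [le_div_iff₀ hs0]
      nlinarith
  have h5 : |w.re| ≤ ‖w‖ := Complex.abs_re_le_norm w
  have h6 := neg_abs_le w.re
  linarith

set_option maxHeartbeats 2000000 in
/-- Consistency estimate for the α-th power of the backward Euler CQ symbol on the
truncated sector: `|δ_τ(e^{-zτ})^α − z^α| ≤ c τ |z|^{1+α}` with `c` independent of `τ`.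
Complex powers are principal-branch powers. -/
theorem be_symbol_power_consistency (α θ : ℝ) (hα : α ∈ Set.Ioo (0 : ℝ) 1)
    (hθ : θ ∈ Set.Ioo (Real.pi / 2) Real.pi) :
    ∃ c : ℝ, 0 < c ∧
      ∀ τ : ℝ, 0 < τ → ∀ z : ℂ, z ≠ 0 → |Complex.arg z| ≤ θ → |z.im| ≤ Real.pi / τ →
        ‖((1 - Complex.exp (-(z * τ))) / (τ : ℂ)) ^ (α : ℂ) - z ^ (α : ℂ)‖
          ≤ c * τ * ‖z‖ ^ (1 + α) := by
  obtain ⟨hα0, hα1⟩ := hα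
  obtain ⟨hθ1, hθ2⟩ := hθ
  have hπ := Real.pi_pos
  set β := Real.pi - θ with hβdef
  have hβ0 : 0 < β := by simp only [hβdef]; linarith
  have hβ2 : β < Real.pi / 2 := by simp only [hβdef]; linarith
  have ht0 : 0 < Real.tan β := Real.tan_pos_of_pos_of_lt_pi_div_two hβ0 hβ2
  set M := Real.pi / Real.sin β with hMdef
  have hs0 : 0 < Real.sin β := Real.sin_pos_of_pos_of_lt_pi hβ0 (by linarith)
  have hM0 : 0 < M := div_pos hπ hs0
  set r := min (1 / 10 : ℝ) (β / 3) with hrdef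
  have hr0 : 0 < r := lt_min (by norm_num) (by linarith)
  have hr10 : r ≤ 1 / 10 := min_le_left _ _
  have hrβ : r ≤ β / 3 := min_le_right _ _
  set A := (1 + Real.exp M) / r with hAdef
  have hexpM : 0 < Real.exp M := Real.exp_pos M
  have hA1 : (1 : ℝ) ≤ A := by
    rw [hAdef, le_div_iff₀ hr0]
    nlinarith
  refine ⟨3 + (A + 1) / r, by positivity, ?_⟩
  intro τ hτ z hz harg him
  have hτC : (τ : ℂ) ≠ 0 := by exact_mod_cast hτ.ne'
  set w := z * (τ : ℂ) with hwdef
  have hw0 : w ≠ 0 := mul_ne_zero hz hτC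
  have hwim : |w.im| ≤ Real.pi := by
    have hwe : w.im = z.im * τ := by simp [hwdef]
    rw [hwe, abs_mul, abs_of_pos hτ]
    calc |z.im| * τ ≤ Real.pi / τ * τ := by gcongr
      _ = Real.pi := by field_simp
  have hargw : Complex.arg w = Complex.arg z := by
    rw [hwdef, mul_comm]
    exact Complex.arg_real_mul z hτ
  have hexp1 : Complex.exp (-w) ≠ 1 := aux_ne_one hw0 hwim
  set δ : ℂ := (1 - Complex.exp (-w)) / (τ : ℂ) with hδdef
  have hδ0 : δ ≠ 0 := by
    rw [hδdef]
    exact div_ne_zero (sub_ne_zero.mpr (Ne.symm hexp1)) hτC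
  have habsz : 0 < ‖z‖ := norm_pos_iff.mpr hz
  have habsw : ‖w‖ = ‖z‖ * τ := by
    rw [hwdef, norm_mul, Complex.norm_real, Real.norm_eq_abs, abs_of_pos hτ]
  have hzpow : ‖z‖ ^ (1 + α) = ‖z‖ * ‖z‖ ^ α := by
    rw [Real.rpow_add habsz, Real.rpow_one]
  have hwre : -M ≤ w.re := by
    rw [hMdef]
    exact aux_re_lower hθ1 hθ2 hw0 (by rw [hargw]; exact harg) hwim
  rcases le_or_gt (‖w‖) r with hsmall | hlarge
  · -- small case: |w| ≤ r
    set G := δ / z with hGdef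
    have hG0 : G ≠ 0 := div_ne_zero hδ0 hz
    have hGform : G = (1 - Complex.exp (-w)) / w := by
      rw [hGdef, hδdef, hwdef, div_div, mul_comm]
    have hG1 : ‖G - 1‖ ≤ ‖w‖ := by
      rw [hGform]
      exact aux_g_sub_one hw0 (le_trans hsmall (by linarith))
    have hG12 : ‖G - 1‖ ≤ 1 / 2 := le_trans hG1 (le_trans hsmall (by linarith))
    have hlogG : ‖Complex.log G‖ ≤ 3 / 2 * ‖G - 1‖ := by
      have := Complex.norm_log_one_add_half_le_self (z := G - 1)
        (by simpa using hG12)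
      simpa using this
    have hL : Complex.log δ - Complex.log z = Complex.log G := by
      have hexpL : Complex.exp (Complex.log δ - Complex.log z - Complex.log G) = 1 := by
        rw [Complex.exp_sub, Complex.exp_sub, Complex.exp_log hδ0, Complex.exp_log hz,
          Complex.exp_log hG0, hGdef]
        field_simp
      obtain ⟨n, hn⟩ := Complex.exp_eq_one_iff.mp hexpL
      have him_eq : Complex.arg δ - Complex.arg z - Complex.arg G = (n : ℝ) * (2 * Real.pi) := by
        have himn := congrArg Complex.im hn
        simp only [Complex.sub_im, Complex.log_im, Complex.mul_im, Complex.mul_re,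
          Complex.intCast_re, Complex.intCast_im, Complex.ofReal_re, Complex.ofReal_im,
          Complex.I_re, Complex.I_im, Complex.re_ofNat, Complex.im_ofNat] at himn
        rw [himn]
        ring
      have hargG : |Complex.arg G| ≤ β / 2 := by
        have h1 : |Complex.arg G| ≤ ‖Complex.log G‖ := by
          rw [← Complex.log_im]
          exact Complex.abs_im_le_norm _
        calc |Complex.arg G| ≤ 3 / 2 * ‖G - 1‖ := le_trans h1 hlogG
          _ ≤ 3 / 2 * r := by nlinarith [le_trans hG1 hsmall]
          _ ≤ β / 2 := by linarith
      have hn0 : n = 0 := by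
        by_contra h0
        have h1 : (1 : ℝ) ≤ |(n : ℝ)| := by exact_mod_cast Int.one_le_abs h0
        have h2 : |Complex.arg δ - Complex.arg z - Complex.arg G| ≥ 2 * Real.pi := by
          rw [him_eq, abs_mul, abs_of_pos (show (0:ℝ) < 2 * Real.pi by positivity)]
          nlinarith [Real.pi_pos]
        have h3 : |Complex.arg δ - Complex.arg z - Complex.arg G| < 2 * Real.pi := by
          have ha := abs_le.mp (Complex.abs_arg_le_pi δ)
          have hb := abs_le.mp harg
          have hc := abs_le.mp hargG
          simp only [hβdef] at hc
          rw [abs_lt]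
          constructor <;> linarith
        linarith
      rw [hn0] at hn
      have hn' : Complex.log δ - Complex.log z - Complex.log G = 0 := by simpa using hn
      exact sub_eq_zero.mp hn'
    have hkey : Complex.log δ * (α : ℂ) = Complex.log z * (α : ℂ) + Complex.log G * (α : ℂ) := by
      rw [← hL]; ring
    rw [Complex.cpow_def_of_ne_zero hδ0, Complex.cpow_def_of_ne_zero hz, hkey, Complex.exp_add]
    have hfact : Complex.exp (Complex.log z * (α : ℂ)) * Complex.exp (Complex.log G * (α : ℂ)) -
        Complex.exp (Complex.log z * (α : ℂ)) =
        Complex.exp (Complex.log z * (α : ℂ)) * (Complex.exp (Complex.log G * (α : ℂ)) - 1) := by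
      ring
    rw [hfact, norm_mul]
    have h1 : ‖Complex.exp (Complex.log z * (α : ℂ))‖ = ‖z‖ ^ α := by
      rw [Complex.norm_exp, Real.rpow_def_of_pos habsz]
      congr 1
      simp [Complex.mul_re, Complex.log_re, Complex.log_im]
    have habsLGα : ‖Complex.log G * (α : ℂ)‖ ≤ 3 / 2 * ‖w‖ := by
      rw [norm_mul, Complex.norm_real, Real.norm_eq_abs, abs_of_pos hα0]
      calc ‖Complex.log G‖ * α ≤ (3 / 2 * ‖G - 1‖) * 1 := by
            apply mul_le_mul hlogG (by linarith) hα0.le (by positivity)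
        _ ≤ 3 / 2 * ‖w‖ := by nlinarith
    have habsLGα1 : ‖Complex.log G * (α : ℂ)‖ ≤ 1 := by
      calc ‖Complex.log G * (α : ℂ)‖ ≤ 3 / 2 * ‖w‖ := habsLGα
        _ ≤ 3 / 2 * r := by linarith
        _ ≤ 1 := by linarith
    have h2 : ‖Complex.exp (Complex.log G * (α : ℂ)) - 1‖ ≤ 3 * ‖w‖ := by
      calc ‖Complex.exp (Complex.log G * (α : ℂ)) - 1‖
          ≤ 2 * ‖Complex.log G * (α : ℂ)‖ := Complex.norm_exp_sub_one_le habsLGα1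
        _ ≤ 3 * ‖w‖ := by linarith
    rw [h1]
    calc ‖z‖ ^ α * ‖Complex.exp (Complex.log G * (α : ℂ)) - 1‖
        ≤ ‖z‖ ^ α * (3 * ‖w‖) := by
          apply mul_le_mul_of_nonneg_left h2 (by positivity)
      _ = 3 * τ * ‖z‖ ^ (1 + α) := by
          rw [habsw, hzpow]; ring
      _ ≤ (3 + (A + 1) / r) * τ * ‖z‖ ^ (1 + α) := by
          have hpos : (0:ℝ) ≤ τ * ‖z‖ ^ (1 + α) := by positivity
          have : (0:ℝ) ≤ (A + 1) / r := by positivity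
          nlinarith
  · -- large case: |w| > r
    have hδle : ‖δ‖ ≤ A * ‖z‖ := by
      have h1 : ‖1 - Complex.exp (-w)‖ ≤ 1 + Real.exp M := by
        calc ‖1 - Complex.exp (-w)‖
            ≤ ‖(1 : ℂ)‖ + ‖Complex.exp (-w)‖ := by
              simpa using norm_sub_le 1 (Complex.exp (-w))
          _ ≤ 1 + Real.exp M := by
              rw [norm_one, Complex.norm_exp]
              have : (-w).re ≤ M := by simp only [Complex.neg_re]; linarith
              have := Real.exp_le_exp.mpr this
              linarith
      have h2 : ‖δ‖ = ‖1 - Complex.exp (-w)‖ / τ := by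
        rw [hδdef, norm_div, Complex.norm_real, Real.norm_eq_abs, abs_of_pos hτ]
      rw [h2, hAdef]
      rw [div_le_iff₀ hτ]
      have hrw : r ≤ ‖z‖ * τ := by rw [← habsw]; exact hlarge.le
      calc ‖1 - Complex.exp (-w)‖ ≤ 1 + Real.exp M := h1
        _ = (1 + Real.exp M) / r * r := by field_simp
        _ ≤ (1 + Real.exp M) / r * (‖z‖ * τ) := by
            apply mul_le_mul_of_nonneg_left hrw (by positivity)
        _ = (1 + Real.exp M) / r * ‖z‖ * τ := by ring
    have habsδα : ‖δ ^ (α : ℂ)‖ = ‖δ‖ ^ α := by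
      rw [Complex.norm_cpow_of_ne_zero hδ0]
      simp
    have habszα : ‖z ^ (α : ℂ)‖ = ‖z‖ ^ α := by
      rw [Complex.norm_cpow_of_ne_zero hz]
      simp
    have hδα : ‖δ‖ ^ α ≤ A * ‖z‖ ^ α := by
      calc ‖δ‖ ^ α ≤ (A * ‖z‖) ^ α :=
            Real.rpow_le_rpow (norm_nonneg δ) hδle hα0.le
        _ = A ^ α * ‖z‖ ^ α := Real.mul_rpow (by linarith) (norm_nonneg z)
        _ ≤ A * ‖z‖ ^ α := by
            have : A ^ α ≤ A ^ (1:ℝ) :=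
              Real.rpow_le_rpow_of_exponent_le hA1 (by linarith)
            rw [Real.rpow_one] at this
            have hzα : (0:ℝ) ≤ ‖z‖ ^ α := by positivity
            nlinarith
    calc ‖δ ^ (α : ℂ) - z ^ (α : ℂ)‖
        ≤ ‖δ ^ (α : ℂ)‖ + ‖z ^ (α : ℂ)‖ := by
          simpa using norm_sub_le (δ ^ (α : ℂ)) (z ^ (α : ℂ))
      _ = ‖δ‖ ^ α + ‖z‖ ^ α := by rw [habsδα, habszα]
      _ ≤ (A + 1) * ‖z‖ ^ α := by
          have hzα : (0:ℝ) ≤ ‖z‖ ^ α := by positivity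
          nlinarith
      _ ≤ (A + 1) / r * (‖w‖ * ‖z‖ ^ α) := by
          have h1 : (A + 1) / r * ‖w‖ ≥ A + 1 := by
            rw [ge_iff_le, div_mul_eq_mul_div, le_div_iff₀ hr0]
            have : (0:ℝ) ≤ A + 1 := by linarith
            nlinarith
          have hzα : (0:ℝ) ≤ ‖z‖ ^ α := by positivity
          calc (A + 1) * ‖z‖ ^ α
              ≤ ((A + 1) / r * ‖w‖) * ‖z‖ ^ α := by
                apply mul_le_mul_of_nonneg_right h1 hzα
            _ = (A + 1) / r * (‖w‖ * ‖z‖ ^ α) := by ring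
      _ = (A + 1) / r * τ * ‖z‖ ^ (1 + α) := by
          rw [habsw, hzpow]; ring
      _ ≤ (3 + (A + 1) / r) * τ * ‖z‖ ^ (1 + α) := by
          have hpos : (0:ℝ) ≤ τ * ‖z‖ ^ (1 + α) := by positivity
          nlinarith
end

section
/- Let α ∈ (0,1), λ > 0, τ > 0, θ ∈ (π/2,π), and λ a positive real. For z on the truncated contour Γ^τ_{θ,σ} one has the bound |z^{α-1}/(z^α+λ) − δ_τ(e^{-zτ})^{α-1}/(δ_τ(e^{-zτ})^α+λ)| ≤ c τ λ^{-1} |z|^α, where c is independent of τ, λ, z. -/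
open Complex

noncomputable def Complex.abs : AbsoluteValue ℂ ℝ := NormedField.toAbsoluteValue ℂ

@[simp] theorem Complex.norm_eq_abs (z : ℂ) : ‖z‖ = Complex.abs z := rfl

theorem Complex.sq_abs (z : ℂ) : Complex.abs z ^ 2 = Complex.normSq z := Complex.sq_norm z

theorem Complex.abs_cpow_real (x : ℂ) (y : ℝ) : Complex.abs (x ^ (y : ℂ)) = Complex.abs x ^ y :=
  Complex.norm_cpow_real x y

@[simp] theorem Complex.abs_ofReal (r : ℝ) : Complex.abs (r : ℂ) = |r| := Complex.norm_real r

theorem Complex.abs_exp_sub_one_sub_id_le {x : ℂ} (hx : Complex.abs x ≤ 1) :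
    Complex.abs (Complex.exp x - 1 - x) ≤ Complex.abs x ^ 2 :=
  Complex.norm_exp_sub_one_sub_id_le hx

lemma kdb_aux_resolvent (α : ℝ) (hα0 : 0 < α) (hα1 : α < 1) (lam : ℝ) (hlam : 0 < lam)
    (w : ℂ) (hw : w ≠ 0) :
    Real.cos (α * Real.pi / 2) * lam ≤ Complex.abs (w ^ (α : ℂ) + lam) ∧
    Real.cos (α * Real.pi / 2) * Complex.abs w ^ α ≤ Complex.abs (w ^ (α : ℂ) + lam) := by
  have hπ := Real.pi_pos
  set K := Real.cos (α * Real.pi / 2) with hK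
  have hK0 : 0 < K := Real.cos_pos_of_mem_Ioo ⟨by nlinarith, by nlinarith⟩
  have hK1 : K ≤ 1 := Real.cos_le_one _
  set x : ℝ := Complex.abs w ^ α with hx
  have hx0 : 0 < x := Real.rpow_pos_of_pos (Complex.abs.pos hw) _
  set u : ℂ := w ^ (α : ℂ) with hu
  have habs : Complex.abs u = x := by
    rw [hu, hx, ← Complex.abs_cpow_real]
  have hre : u.re = x * Real.cos (α * Complex.arg w) := by
    rw [hu, Complex.cpow_def_of_ne_zero hw, Complex.exp_re]
    have h1 : ((α : ℂ) * Complex.log w).re = α * Real.log (Complex.abs w) := by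
      simp [Complex.log_re]
    have h2 : ((α : ℂ) * Complex.log w).im = α * Complex.arg w := by
      simp [Complex.log_im]
    rw [mul_comm (Complex.log w) (α:ℂ), h1, h2, hx,
      Real.rpow_def_of_pos (Complex.abs.pos hw), mul_comm (Real.log _) α]
  have hcos : Real.cos (α * Real.pi) ≤ Real.cos (α * Complex.arg w) := by
    rw [← Real.cos_abs (α * Complex.arg w)]
    apply Real.cos_le_cos_of_nonneg_of_le_pi (abs_nonneg _) (by nlinarith)
    rw [abs_mul, abs_of_pos hα0]
    have := Complex.abs_arg_le_pi w
    nlinarith [abs_nonneg (Complex.arg w)]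
  have hcos2 : Real.cos (α * Real.pi) = 2 * K ^ 2 - 1 := by
    have h := Real.cos_two_mul (α * Real.pi / 2)
    rw [hK]
    have h2 : 2 * (α * Real.pi / 2) = α * Real.pi := by ring
    rw [h2] at h
    linarith
  -- |u + lam|^2 = x^2 + 2 lam u.re + lam^2
  have hsq : Complex.abs (u + lam) ^ 2 = x ^ 2 + 2 * lam * u.re + lam ^ 2 := by
    rw [Complex.sq_abs, Complex.normSq_apply]
    have h1 : (u + (lam : ℂ)).re = u.re + lam := by simp
    have h2 : (u + (lam : ℂ)).im = u.im := by simp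
    rw [h1, h2]
    have h3 : u.re ^ 2 + u.im ^ 2 = x ^ 2 := by
      rw [← habs, Complex.sq_abs, Complex.normSq_apply]; ring
    nlinarith [h3]
  have hmain : K * (x + lam) ≤ Complex.abs (u + lam) := by
    have h1 : u.re ≥ x * (2 * K ^ 2 - 1) := by
      rw [hre, ← hcos2]
      exact mul_le_mul_of_nonneg_left hcos hx0.le
    have h2 : (K * (x + lam)) ^ 2 ≤ Complex.abs (u + lam) ^ 2 := by
      rw [hsq]
      nlinarith [mul_nonneg (sub_nonneg.2 (by nlinarith : K ^ 2 ≤ 1)) (sq_nonneg (x - lam)),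
        mul_le_mul_of_nonneg_left h1 (by linarith : (0:ℝ) ≤ 2 * lam)]
    have h3 : 0 ≤ Complex.abs (u + lam) := Complex.abs.nonneg _
    nlinarith [h2, h3, mul_pos hK0 (by positivity : (0:ℝ) < x + lam)]
  constructor
  · calc K * lam ≤ K * (x + lam) := by nlinarith
    _ ≤ _ := hmain
  · calc K * x ≤ K * (x + lam) := by nlinarith
    _ ≤ _ := hmain


-- Jordan-type: 1 - cos y ≥ 2 y^2 / π^2 for |y| ≤ π  (stated multiplied out)
lemma kdb_aux_jordan {y : ℝ} (hy : |y| ≤ Real.pi) :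
    2 * y ^ 2 ≤ (1 - Real.cos y) * Real.pi ^ 2 := by
  have hπ := Real.pi_pos
  have h1 : Real.sin (|y| / 2) ^ 2 = 1 / 2 - Real.cos (2 * (|y| / 2)) / 2 :=
    Real.sin_sq_eq_half_sub _
  have h2 : 2 / Real.pi * (|y| / 2) ≤ Real.sin (|y| / 2) :=
    Real.mul_le_sin (by positivity) (by linarith)
  have h3 : Real.cos (2 * (|y| / 2)) = Real.cos y := by
    rw [mul_div_cancel₀ _ (two_ne_zero)]
    exact Real.cos_abs y
  rw [h3] at h1
  have h4 : (2 / Real.pi * (|y| / 2)) ^ 2 ≤ Real.sin (|y| / 2) ^ 2 :=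
    pow_le_pow_left₀ (by positivity) h2 2
  have h5 : (2 / Real.pi * (|y| / 2)) ^ 2 * Real.pi ^ 2 = y ^ 2 := by
    field_simp
    nlinarith [_root_.sq_abs y, Real.pi_pos]
  have h6 : (2 / Real.pi * (|y| / 2)) ^ 2 * Real.pi ^ 2
      ≤ Real.sin (|y| / 2) ^ 2 * Real.pi ^ 2 :=
    mul_le_mul_of_nonneg_right h4 (by positivity)
  rw [h5, h1] at h6
  nlinarith [h6]

-- lower bound for |1 - e^{-s}|
set_option maxHeartbeats 2000000 in
lemma kdb_aux_exp_lb {r₀ : ℝ} (hr0 : 0 < r₀) (hr1 : r₀ ≤ 1 / 2) {s : ℂ}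
    (hs : r₀ ≤ Complex.abs s) (him : |s.im| ≤ Real.pi) :
    r₀ / (2 * Real.pi) ≤ Complex.abs (1 - Complex.exp (-s)) := by
  have hπ := Real.pi_pos
  have hπ2 : (2:ℝ) ≤ Real.pi := by nlinarith [Real.pi_gt_three]
  set x : ℝ := s.re with hxd
  set y : ℝ := s.im with hyd
  have hre : (1 - Complex.exp (-s)).re = 1 - Real.exp (-x) * Real.cos y := by
    simp [Complex.exp_re, hxd, hyd]
  have him' : (1 - Complex.exp (-s)).im = Real.exp (-x) * Real.sin y := by
    simp [Complex.exp_im, hxd, hyd]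
  have hsq : Complex.abs (1 - Complex.exp (-s)) ^ 2
      = (1 - Real.exp (-x)) ^ 2 + 2 * Real.exp (-x) * (1 - Real.cos y) := by
    rw [Complex.sq_abs, Complex.normSq_apply, hre, him']
    linear_combination Real.exp (-x) ^ 2 * Real.sin_sq_add_cos_sq y
  have habs : 0 ≤ Complex.abs (1 - Complex.exp (-s)) := Complex.abs.nonneg _
  set c := r₀ / (2 * Real.pi) with hc
  have hc0 : 0 < c := by positivity
  have hE : 0 < Real.exp (-x) := Real.exp_pos _
  have hcy : Real.cos y ≤ 1 := Real.cos_le_one y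
  rcases le_or_gt x (-(r₀/2)) with hx | hx
  · -- x very negative : |1 - e^{-s}| ≥ e^{-x} - 1 ≥ r₀/2
    have h1 : Real.exp (-x) - 1 ≥ r₀ / 2 := by
      have := Real.add_one_le_exp (-x)
      linarith
    have hcle : c ≤ r₀ / 2 := by
      rw [hc, div_le_div_iff₀ (by positivity) (by norm_num)]
      nlinarith
    have h3 : c ^ 2 ≤ Complex.abs (1 - Complex.exp (-s)) ^ 2 := by
      rw [hsq]
      nlinarith [mul_nonneg hE.le (by linarith : (0:ℝ) ≤ 1 - Real.cos y)]
    nlinarith [h3, habs, hc0]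
  rcases le_or_gt (r₀/2) x with hx2 | hx2
  · -- x ≥ r₀/2 : |1 - e^{-s}| ≥ 1 - e^{-x} ≥ r₀/4
    have h1 : Real.exp (-x) ≤ 1 / (1 + r₀ / 2) := by
      have ha : 1 + r₀ / 2 ≤ Real.exp x := by
        have h := Real.add_one_le_exp (r₀ / 2)
        have h2 : Real.exp (r₀ / 2) ≤ Real.exp x := Real.exp_le_exp.2 hx2
        linarith
      rw [Real.exp_neg, one_div]
      exact inv_anti₀ (by positivity) ha
    have h2 : 1 - Real.exp (-x) ≥ r₀ / 4 := by
      have hb : 1 / (1 + r₀ / 2) ≤ 1 - r₀ / 4 := by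
        rw [div_le_iff₀ (by linarith)]
        nlinarith
      linarith
    have hcle : c ≤ r₀ / 4 := by
      rw [hc, div_le_div_iff₀ (by positivity) (by norm_num)]
      nlinarith
    have h3 : c ^ 2 ≤ Complex.abs (1 - Complex.exp (-s)) ^ 2 := by
      rw [hsq]
      nlinarith [mul_nonneg hE.le (by linarith : (0:ℝ) ≤ 1 - Real.cos y)]
    nlinarith [h3, habs, hc0]
  · -- |x| ≤ r₀/2 : use imaginary part
    have hy2 : (3/4) * r₀ ^ 2 ≤ y ^ 2 := by
      have habs2 : r₀ ^ 2 ≤ x ^ 2 + y ^ 2 := by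
        have h1 : r₀ ^ 2 ≤ Complex.abs s ^ 2 := pow_le_pow_left₀ hr0.le hs 2
        rw [Complex.sq_abs, Complex.normSq_apply] at h1
        nlinarith [h1]
      nlinarith
    have he : (1:ℝ)/2 ≤ Real.exp (-x) := by
      have h := Real.add_one_le_exp (-x)
      nlinarith
    have hj := kdb_aux_jordan him
    have hcos0 : (0:ℝ) ≤ 1 - Real.cos y := by linarith
    have h3 : c ^ 2 ≤ Complex.abs (1 - Complex.exp (-s)) ^ 2 := by
      rw [hsq, hc, div_pow, div_le_iff₀ (by positivity)]
      nlinarith [mul_le_mul_of_nonneg_left hj hE.le,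
        mul_le_mul_of_nonneg_right he (sq_nonneg y),
        mul_nonneg (sq_nonneg (1 - Real.exp (-x))) (sq_nonneg (2 * Real.pi)),
        sq_nonneg Real.pi, hy2, hπ, hcos0, hE.le, sq_nonneg r₀]
    nlinarith [h3, habs, hc0]


-- points near z stay in the slit plane, when |arg z| ≤ θ < π
lemma kdb_aux_slit (θ : ℝ) (hθ1 : Real.pi / 2 < θ) (hθ2 : θ < Real.pi)
    (z ζ : ℂ) (hz : z ≠ 0) (harg : |Complex.arg z| ≤ θ)
    (hd : Complex.abs (ζ - z) ≤ Real.sin θ / 2 * Complex.abs z) :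
    ζ ∈ Complex.slitPlane := by
  have hπ := Real.pi_pos
  have hR : 0 < Complex.abs z := Complex.abs.pos hz
  have hsθ : 0 < Real.sin θ := Real.sin_pos_of_pos_of_lt_pi (by linarith) hθ2
  have hsθ1 : Real.sin θ ≤ 1 := Real.sin_le_one θ
  rw [Complex.mem_slitPlane_iff]
  by_contra hcon
  push_neg at hcon
  obtain ⟨hre, him⟩ := hcon
  have hdim : |ζ.im - z.im| ≤ Real.sin θ / 2 * Complex.abs z := by
    calc |ζ.im - z.im| = |(ζ - z).im| := by simp
    _ ≤ Complex.abs (ζ - z) := Complex.abs_im_le_norm _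
    _ ≤ _ := hd
  rw [him] at hdim
  have hzim : |z.im| ≤ Real.sin θ / 2 * Complex.abs z := by
    rw [abs_sub_comm] at hdim; simpa using hdim
  have hargpi : |Complex.arg z| ≤ Real.pi := Complex.abs_arg_le_pi z
  rcases lt_or_ge z.re 0 with hzre | hzre
  · -- z.re < 0 : |z.im| ≥ sin θ * |z|
    have hco : Real.cos (Complex.arg z) < 0 := by
      rw [Complex.cos_arg hz]
      exact div_neg_of_neg_of_pos hzre hR
    have h1 : Real.pi / 2 < |Complex.arg z| := by
      by_contra h
      push_neg at h
      have : 0 ≤ Real.cos (Complex.arg z) := by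
        rw [← Real.cos_abs]
        exact Real.cos_nonneg_of_mem_Icc ⟨by linarith [abs_nonneg (Complex.arg z)], h⟩
      linarith
    have h2 : Real.sin θ ≤ Real.sin |Complex.arg z| := by
      have e1 : Real.sin θ = Real.cos (θ - Real.pi / 2) := by
        rw [← Real.cos_neg, neg_sub, Real.cos_pi_div_two_sub]
      have e2 : Real.sin |Complex.arg z| = Real.cos (|Complex.arg z| - Real.pi / 2) := by
        rw [← Real.cos_neg, neg_sub, Real.cos_pi_div_two_sub]
      rw [e1, e2]
      exact Real.cos_le_cos_of_nonneg_of_le_pi (by linarith) (by linarith) (by linarith)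
    have him_eq : z.im = Complex.abs z * Real.sin (Complex.arg z) := by
      rw [Complex.sin_arg]
      field_simp
      rfl
    have habs_sin : |Real.sin (Complex.arg z)| = Real.sin |Complex.arg z| := by
      rcases le_or_gt 0 (Complex.arg z) with h | h
      · have hle : Complex.arg z ≤ Real.pi := Complex.arg_le_pi z
        rw [_root_.abs_of_nonneg h, _root_.abs_of_nonneg (Real.sin_nonneg_of_nonneg_of_le_pi h hle)]
      · have h2' : 0 ≤ Real.sin (-Complex.arg z) := by
          apply Real.sin_nonneg_of_nonneg_of_le_pi (by linarith)
          rw [_root_.abs_of_neg h] at hargpi; linarith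
        rw [_root_.abs_of_neg h]
        rw [Real.sin_neg] at h2'
        rw [_root_.abs_of_nonpos (by linarith : Real.sin z.arg ≤ 0), Real.sin_neg]
    have h3 : |z.im| = Complex.abs z * Real.sin |Complex.arg z| := by
      rw [him_eq, abs_mul, _root_.abs_of_pos hR, habs_sin]
    have h4 : Complex.abs z * Real.sin θ ≤ Complex.abs z * Real.sin |Complex.arg z| :=
      mul_le_mul_of_nonneg_left h2 hR.le
    have h5 : 0 < Complex.abs z * Real.sin θ := mul_pos hR hsθ
    linarith [hzim, h3, h4, h5]
  · -- z.re ≥ 0 : then |z.im| would be large, contradiction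
    have h1 : z.re ≤ Real.sin θ / 2 * Complex.abs z := by
      have ha : z.re - ζ.re ≤ |(z - ζ).re| := by
        rw [Complex.sub_re]; exact le_abs_self _
      have hb : |(z - ζ).re| ≤ Complex.abs (z - ζ) := Complex.abs_re_le_norm _
      have hc : Complex.abs (z - ζ) = Complex.abs (ζ - z) := by
        rw [← neg_sub ζ z, Complex.abs.map_neg]
      linarith
    have hsq : Complex.abs z ^ 2 = z.re ^ 2 + z.im ^ 2 := by
      rw [Complex.sq_abs, Complex.normSq_apply]; ring
    have hs2 : (Real.sin θ / 2 * Complex.abs z) ^ 2 ≤ Complex.abs z ^ 2 / 4 := by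
      nlinarith [mul_le_mul_of_nonneg_right
        (mul_le_mul hsθ1 hsθ1 hsθ.le zero_le_one) (sq_nonneg (Complex.abs z))]
    have him2 : z.im ^ 2 ≤ (Real.sin θ / 2 * Complex.abs z) ^ 2 := by
      rw [← _root_.sq_abs z.im]
      exact pow_le_pow_left₀ (abs_nonneg _) hzim 2
    have hre2 : z.re ^ 2 ≤ (Real.sin θ / 2 * Complex.abs z) ^ 2 :=
      pow_le_pow_left₀ hzre h1 2
    nlinarith [hsq, him2, hre2, hs2, hR]

-- mean value estimate for cpow along a ball around z
lemma kdb_aux_cpow_diff (α θ : ℝ) (hα0 : 0 < α) (hα1 : α < 1)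
    (hθ1 : Real.pi / 2 < θ) (hθ2 : θ < Real.pi)
    (z w : ℂ) (hz : z ≠ 0) (harg : |Complex.arg z| ≤ θ)
    (hcl : Complex.abs (w - z) ≤ Real.sin θ / 2 * Complex.abs z) :
    Complex.abs (w ^ (α : ℂ) - z ^ (α : ℂ))
      ≤ 2 * Complex.abs z ^ (α - 1) * Complex.abs (w - z) := by
  have hπ := Real.pi_pos
  have hR : 0 < Complex.abs z := Complex.abs.pos hz
  have hsθ : 0 < Real.sin θ := Real.sin_pos_of_pos_of_lt_pi (by linarith) hθ2
  have hsθ1 : Real.sin θ ≤ 1 := Real.sin_le_one θ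
  set r : ℝ := Real.sin θ / 2 * Complex.abs z with hr
  have hr0 : 0 < r := by positivity
  set S : Set ℂ := Metric.closedBall z r with hS
  have hconv : Convex ℝ S := convex_closedBall z r
  have hmem : ∀ ζ ∈ S, ζ ∈ Complex.slitPlane ∧ Complex.abs z / 2 ≤ Complex.abs ζ := by
    intro ζ hζ
    have hdist : Complex.abs (ζ - z) ≤ r := by
      rw [hS, Metric.mem_closedBall, Complex.dist_eq] at hζ
      exact hζ
    constructor
    · exact kdb_aux_slit θ hθ1 hθ2 z ζ hz harg hdist
    · have h1 : Complex.abs z ≤ Complex.abs ζ + Complex.abs (z - ζ) := by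
        calc Complex.abs z = Complex.abs (ζ + (z - ζ)) := by ring_nf
        _ ≤ _ := Complex.abs.add_le _ _
      have h2 : Complex.abs (z - ζ) ≤ Complex.abs z / 2 := by
        rw [← neg_sub ζ z, Complex.abs.map_neg]
        calc Complex.abs (ζ - z) ≤ r := hdist
        _ ≤ Complex.abs z / 2 := by rw [hr]; nlinarith
      linarith
  -- derivative bound
  set C : ℝ := 2 * Complex.abs z ^ (α - 1) with hC
  have hderiv : ∀ ζ ∈ S, HasFDerivWithinAt (fun x : ℂ => x ^ (α : ℂ))
      (ContinuousLinearMap.smulRight (1 : ℂ →L[ℂ] ℂ) ((α : ℂ) * ζ ^ ((α : ℂ) - 1))) S ζ := by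
    intro ζ hζ
    have h := (Complex.hasStrictDerivAt_cpow_const (c := (α:ℂ)) (hmem ζ hζ).1).hasDerivAt
    exact h.hasFDerivAt.hasFDerivWithinAt
  have hbound : ∀ ζ ∈ S, ‖ContinuousLinearMap.smulRight (1 : ℂ →L[ℂ] ℂ)
      ((α : ℂ) * ζ ^ ((α : ℂ) - 1))‖ ≤ C := by
    intro ζ hζ
    rw [ContinuousLinearMap.norm_smulRight_apply, norm_one, one_mul]
    have hζ0 : ζ ≠ 0 := by
      intro h
      have := (hmem ζ hζ).2
      rw [h] at this
      simp at this
      linarith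
    have habs : ‖(α : ℂ) * ζ ^ ((α : ℂ) - 1)‖ = α * Complex.abs ζ ^ (α - 1) := by
      rw [norm_mul, Complex.norm_eq_abs, Complex.norm_eq_abs, Complex.abs_ofReal,
        _root_.abs_of_pos hα0]
      congr 1
      have : ((α : ℂ) - 1) = ((α - 1 : ℝ) : ℂ) := by push_cast; ring
      rw [this, Complex.abs_cpow_real]
    rw [habs]
    have h2 : Complex.abs ζ ^ (α - 1) ≤ (Complex.abs z / 2) ^ (α - 1) :=
      Real.rpow_le_rpow_of_nonpos (by positivity) (hmem ζ hζ).2 (by linarith)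
    have h3 : (Complex.abs z / 2) ^ (α - 1) ≤ 2 * Complex.abs z ^ (α - 1) := by
      rw [div_eq_mul_inv, Real.mul_rpow hR.le (by norm_num),
        Real.inv_rpow (by norm_num : (0:ℝ) ≤ 2), ← Real.rpow_neg (by norm_num : (0:ℝ) ≤ 2)]
      have h4 : (2:ℝ) ^ (-(α - 1)) ≤ 2 := by
        calc (2:ℝ) ^ (-(α - 1)) ≤ (2:ℝ) ^ (1:ℝ) :=
          Real.rpow_le_rpow_of_exponent_le one_le_two (by linarith)
        _ = 2 := Real.rpow_one 2
      rw [mul_comm]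
      exact mul_le_mul_of_nonneg_right h4 (Real.rpow_nonneg (Complex.abs.nonneg _) _)
    calc α * Complex.abs ζ ^ (α - 1) ≤ 1 * Complex.abs ζ ^ (α - 1) := by
          apply mul_le_mul_of_nonneg_right (by linarith) (Real.rpow_nonneg (Complex.abs.nonneg _) _)
    _ = Complex.abs ζ ^ (α - 1) := one_mul _
    _ ≤ (Complex.abs z / 2) ^ (α - 1) := h2
    _ ≤ C := by rw [hC]; exact h3
  have hzS : z ∈ S := Metric.mem_closedBall_self hr0.le
  have hwS : w ∈ S := by
    rw [hS, Metric.mem_closedBall, Complex.dist_eq]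
    exact hcl
  have := hconv.norm_image_sub_le_of_norm_hasFDerivWithin_le hderiv hbound hzS hwS
  simpa [Complex.norm_eq_abs, Complex.dist_eq] using this


set_option maxHeartbeats 4000000 in
/-- Kernel comparison estimate on the truncated contour: for `z ∈ Γ^τ_{θ,σ}`,
`|z^{α-1}/(z^α+λ) − δ_τ(e^{-zτ})^{α-1}/(δ_τ(e^{-zτ})^α+λ)| ≤ c τ λ⁻¹ |z|^α`,
with `c` independent of `τ`, `λ` and `z`. Here `δ_τ(e^{-zτ}) = (1 - e^{-zτ})/τ`. -/
theorem kernel_difference_bound (α θ : ℝ) (hα : α ∈ Set.Ioo (0 : ℝ) 1)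
    (hθ : θ ∈ Set.Ioo (Real.pi / 2) Real.pi) :
    ∃ c : ℝ, 0 < c ∧
      ∀ τ lam : ℝ, 0 < τ → 0 < lam →
      ∀ z : ℂ, z ≠ 0 → |Complex.arg z| ≤ θ → |z.im| ≤ Real.pi / τ →
        ‖(z ^ ((α : ℂ) - 1) / (z ^ (α : ℂ) + (lam : ℂ)) -
              ((1 - Complex.exp (-(z * τ))) / (τ : ℂ)) ^ ((α : ℂ) - 1) /
                (((1 - Complex.exp (-(z * τ))) / (τ : ℂ)) ^ (α : ℂ) + (lam : ℂ)))‖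
          ≤ c * τ * lam⁻¹ * ‖z‖ ^ α := by
  obtain ⟨hα0, hα1⟩ := hα
  obtain ⟨hθ1, hθ2⟩ := hθ
  have hπ := Real.pi_pos
  have hπ3 : (3:ℝ) < Real.pi := Real.pi_gt_three
  set K : ℝ := Real.cos (α * Real.pi / 2) with hK
  have hK0 : 0 < K := Real.cos_pos_of_mem_Ioo ⟨by nlinarith, by nlinarith⟩
  set r₀ : ℝ := Real.sin θ / 2 with hr₀
  have hsθ : 0 < Real.sin θ := Real.sin_pos_of_pos_of_lt_pi (by linarith) hθ2
  have hsθ1 : Real.sin θ ≤ 1 := Real.sin_le_one θ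
  have hr₀0 : 0 < r₀ := by rw [hr₀]; positivity
  have hr₀h : r₀ ≤ 1 / 2 := by rw [hr₀]; linarith
  refine ⟨2 / K + 4 / K ^ 2 + (1 / r₀ + 2 * Real.pi / r₀ ^ 2) / K, by positivity, ?_⟩
  intro τ lam hτ hlam z hz harg him
  simp only [Complex.norm_eq_abs]
  set R : ℝ := Complex.abs z with hRdef
  have hR : 0 < R := Complex.abs.pos hz
  have hτ0 : (τ : ℂ) ≠ 0 := by exact_mod_cast (ne_of_gt hτ)
  set w : ℂ := (1 - Complex.exp (-(z * (τ:ℂ)))) / (τ:ℂ) with hwdef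
  have habs_s : Complex.abs (z * (τ:ℂ)) = R * τ := by
    rw [map_mul, Complex.abs_ofReal, _root_.abs_of_pos hτ, hRdef]
  have hsim : |(z * (τ:ℂ)).im| ≤ Real.pi := by
    have h1 : (z * (τ:ℂ)).im = z.im * τ := by simp [Complex.mul_im]
    rw [h1, abs_mul, _root_.abs_of_pos hτ]
    calc |z.im| * τ ≤ Real.pi / τ * τ := mul_le_mul_of_nonneg_right him hτ.le
    _ = Real.pi := by field_simp
  -- resolvent bounds for z
  obtain ⟨hp1, hp2⟩ := kdb_aux_resolvent α hα0 hα1 lam hlam z hz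
  rw [← hK] at hp1 hp2
  rw [← hRdef] at hp2
  have hp0 : z ^ (α:ℂ) + (lam:ℂ) ≠ 0 := by
    intro h
    rw [h] at hp1
    simp at hp1
    nlinarith
  have hppos : 0 < Complex.abs (z ^ (α:ℂ) + (lam:ℂ)) := by
    calc (0:ℝ) < K * lam := by positivity
    _ ≤ _ := hp1
  have hAabs : Complex.abs (z ^ ((α:ℂ) - 1)) = R ^ (α - 1) := by
    have hcast : ((α:ℂ) - 1) = ((α - 1 : ℝ) : ℂ) := by push_cast; ring
    rw [hcast, Complex.abs_cpow_real, hRdef]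
  have hUabs : Complex.abs (z ^ (α:ℂ)) = R ^ α := by
    rw [← Complex.abs_cpow_real]
  rcases le_or_gt (τ * R) r₀ with hcase | hcase
  · -- CASE 1 : τ|z| small
    have hs1 : Complex.abs (-(z * (τ:ℂ))) ≤ 1 := by
      rw [Complex.abs.map_neg, habs_s]; nlinarith
    have hwz : Complex.abs (w - z) ≤ τ * R ^ 2 := by
      have he : Complex.abs (Complex.exp (-(z * (τ:ℂ))) - 1 - (-(z * (τ:ℂ))))
          ≤ Complex.abs (-(z * (τ:ℂ))) ^ 2 := Complex.abs_exp_sub_one_sub_id_le hs1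
      have heq : w - z = -(Complex.exp (-(z * (τ:ℂ))) - 1 - (-(z * (τ:ℂ)))) / (τ:ℂ) := by
        rw [hwdef]; field_simp; ring
      rw [heq, map_div₀, Complex.abs.map_neg, Complex.abs_ofReal, _root_.abs_of_pos hτ]
      rw [Complex.abs.map_neg, habs_s] at he
      calc Complex.abs (Complex.exp (-(z * (τ:ℂ))) - 1 - (-(z * (τ:ℂ)))) / τ
          ≤ (R * τ) ^ 2 / τ := by gcongr
      _ = τ * R ^ 2 := by field_simp
    have hclose : Complex.abs (w - z) ≤ r₀ * R := by
      calc Complex.abs (w - z) ≤ τ * R ^ 2 := hwz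
      _ = (τ * R) * R := by ring
      _ ≤ r₀ * R := by nlinarith
    have hclose' : Complex.abs (w - z) ≤ Real.sin θ / 2 * Complex.abs z := by
      rw [← hr₀, ← hRdef]; exact hclose
    have hw_lb : R / 2 ≤ Complex.abs w := by
      have h1 : Complex.abs z ≤ Complex.abs w + Complex.abs (z - w) := by
        calc Complex.abs z = Complex.abs (w + (z - w)) := by ring_nf
        _ ≤ _ := Complex.abs.add_le _ _
      have h2 : Complex.abs (z - w) = Complex.abs (w - z) := by
        rw [← neg_sub w z, Complex.abs.map_neg]
      rw [← hRdef] at h1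
      nlinarith [hclose, h1, h2, hr₀h]
    have hw0 : w ≠ 0 := by
      intro h
      rw [h] at hw_lb
      simp at hw_lb
      nlinarith
    obtain ⟨hq1, hq2⟩ := kdb_aux_resolvent α hα0 hα1 lam hlam w hw0
    rw [← hK] at hq1 hq2
    have hq0 : w ^ (α:ℂ) + (lam:ℂ) ≠ 0 := by
      intro h
      rw [h] at hq1
      simp at hq1
      nlinarith
    have hqpos : 0 < Complex.abs (w ^ (α:ℂ) + (lam:ℂ)) := by
      calc (0:ℝ) < K * lam := by positivity
      _ ≤ _ := hq1
    have hrpow2 : R ^ (α - 1) * R ^ 2 = R ^ (α + 1) := by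
      have h2 : (R:ℝ) ^ (2:ℕ) = R ^ ((2:ℕ):ℝ) := (Real.rpow_natCast R 2).symm
      rw [h2, ← Real.rpow_add hR]
      congr 1
      push_cast
      ring
    have huv : Complex.abs (w ^ (α:ℂ) - z ^ (α:ℂ)) ≤ 2 * τ * R ^ (α + 1) := by
      have h1 := kdb_aux_cpow_diff α θ hα0 hα1 hθ1 hθ2 z w hz harg hclose'
      rw [← hRdef] at h1
      have h2 : 2 * R ^ (α - 1) * Complex.abs (w - z) ≤ 2 * R ^ (α - 1) * (τ * R ^ 2) :=
        mul_le_mul_of_nonneg_left hwz (by positivity)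
      have h3 : 2 * R ^ (α - 1) * (τ * R ^ 2) = 2 * τ * R ^ (α + 1) := by
        rw [← hrpow2]; ring
      linarith
    have huv' : Complex.abs (z ^ (α:ℂ) - w ^ (α:ℂ)) ≤ 2 * τ * R ^ (α + 1) := by
      rw [← neg_sub (w ^ (α:ℂ)) (z ^ (α:ℂ)), Complex.abs.map_neg]
      exact huv
    -- key algebraic identity
    have key : z ^ ((α:ℂ) - 1) / (z ^ (α:ℂ) + (lam:ℂ)) - w ^ ((α:ℂ) - 1) / (w ^ (α:ℂ) + (lam:ℂ))
        = z ^ (α:ℂ) * (w - z) / (z * w * (z ^ (α:ℂ) + (lam:ℂ)))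
          + (lam:ℂ) * (z ^ (α:ℂ) - w ^ (α:ℂ)) / (w * (z ^ (α:ℂ) + (lam:ℂ)) * (w ^ (α:ℂ) + (lam:ℂ))) := by
      rw [Complex.cpow_sub _ _ hz, Complex.cpow_sub _ _ hw0, Complex.cpow_one, Complex.cpow_one]
      field_simp
      ring
    rw [key]
    have ht1 : Complex.abs (z ^ (α:ℂ) * (w - z) / (z * w * (z ^ (α:ℂ) + (lam:ℂ))))
        ≤ (R ^ α * (τ * R ^ 2)) / (R * (R / 2) * (K * lam)) := by
      rw [map_div₀, map_mul, map_mul, map_mul, hUabs, ← hRdef]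
      apply div_le_div₀ (by positivity)
      · exact mul_le_mul_of_nonneg_left hwz (by positivity)
      · positivity
      · calc R * (R / 2) * (K * lam) ≤ R * Complex.abs w * (K * lam) := by
              have := mul_le_mul_of_nonneg_left hw_lb hR.le
              nlinarith [mul_le_mul_of_nonneg_right (mul_le_mul_of_nonneg_left hw_lb hR.le)
                (by positivity : (0:ℝ) ≤ K * lam)]
        _ ≤ R * Complex.abs w * Complex.abs (z ^ (α:ℂ) + (lam:ℂ)) := by
              apply mul_le_mul_of_nonneg_left hp1
              positivity
    have ht2 : Complex.abs ((lam:ℂ) * (z ^ (α:ℂ) - w ^ (α:ℂ)) / (w * (z ^ (α:ℂ) + (lam:ℂ)) * (w ^ (α:ℂ) + (lam:ℂ))))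
        ≤ (lam * (2 * τ * R ^ (α + 1))) / ((R / 2) * (K * lam) * (K * lam)) := by
      rw [map_div₀, map_mul, map_mul, map_mul, Complex.abs_ofReal, _root_.abs_of_pos hlam]
      apply div_le_div₀ (by positivity)
      · exact mul_le_mul_of_nonneg_left huv' hlam.le
      · positivity
      · calc (R / 2) * (K * lam) * (K * lam)
            ≤ Complex.abs w * (K * lam) * (K * lam) := by
              nlinarith [mul_le_mul_of_nonneg_right (mul_le_mul_of_nonneg_right hw_lb
                (by positivity : (0:ℝ) ≤ K * lam)) (by positivity : (0:ℝ) ≤ K * lam)]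
        _ ≤ Complex.abs w * Complex.abs (z ^ (α:ℂ) + (lam:ℂ)) * (K * lam) := by
              apply mul_le_mul_of_nonneg_right _ (by positivity)
              exact mul_le_mul_of_nonneg_left hp1 (Complex.abs.nonneg _)
        _ ≤ Complex.abs w * Complex.abs (z ^ (α:ℂ) + (lam:ℂ)) * Complex.abs (w ^ (α:ℂ) + (lam:ℂ)) := by
              apply mul_le_mul_of_nonneg_left hq1
              positivity
    have heq1 : (R ^ α * (τ * R ^ 2)) / (R * (R / 2) * (K * lam))
        = (2 / K) * τ * lam⁻¹ * R ^ α := by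
      field_simp
    have heq2 : (lam * (2 * τ * R ^ (α + 1))) / ((R / 2) * (K * lam) * (K * lam))
        = (4 / K ^ 2) * τ * lam⁻¹ * R ^ α := by
      rw [Real.rpow_add hR, Real.rpow_one]
      field_simp
      ring
    calc Complex.abs _ ≤ _ := Complex.abs.add_le _ _
    _ ≤ (R ^ α * (τ * R ^ 2)) / (R * (R / 2) * (K * lam))
        + (lam * (2 * τ * R ^ (α + 1))) / ((R / 2) * (K * lam) * (K * lam)) := add_le_add ht1 ht2
    _ = (2 / K + 4 / K ^ 2) * (τ * lam⁻¹ * R ^ α) := by rw [heq1, heq2]; ring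
    _ ≤ (2 / K + 4 / K ^ 2 + (1 / r₀ + 2 * Real.pi / r₀ ^ 2) / K) * τ * lam⁻¹ * R ^ α := by
      have h1 : 0 ≤ ((1 / r₀ + 2 * Real.pi / r₀ ^ 2) / K) * (τ * lam⁻¹ * R ^ α) := by positivity
      nlinarith [h1]
  · -- CASE 2 : τ|z| large
    have hsabs : r₀ ≤ Complex.abs (z * (τ:ℂ)) := by rw [habs_s]; nlinarith
    have hE := kdb_aux_exp_lb hr₀0 hr₀h hsabs hsim
    have hwabs : Complex.abs w = Complex.abs (1 - Complex.exp (-(z * (τ:ℂ)))) / τ := by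
      rw [hwdef, map_div₀, Complex.abs_ofReal, _root_.abs_of_pos hτ]
    have hw_lb : r₀ / (2 * Real.pi) / τ ≤ Complex.abs w := by
      rw [hwabs]
      gcongr
    have hw0 : w ≠ 0 := by
      intro h
      rw [h] at hw_lb
      simp only [map_zero] at hw_lb
      have hpos : (0:ℝ) < r₀ / (2 * Real.pi) / τ := by positivity
      linarith
    obtain ⟨hq1, hq2⟩ := kdb_aux_resolvent α hα0 hα1 lam hlam w hw0
    rw [← hK] at hq1 hq2
    have hqpos : 0 < Complex.abs (w ^ (α:ℂ) + (lam:ℂ)) := by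
      calc (0:ℝ) < K * lam := by positivity
      _ ≤ _ := hq1
    have hBabs : Complex.abs (w ^ ((α:ℂ) - 1)) = Complex.abs w ^ (α - 1) := by
      have hcast : ((α:ℂ) - 1) = ((α - 1 : ℝ) : ℂ) := by push_cast; ring
      rw [hcast, Complex.abs_cpow_real]
    -- bound |z|^{α-1}
    have hz_bd : R ^ (α - 1) ≤ (τ / r₀) * R ^ α := by
      have h1 : R ^ (α - 1) = R ^ α / R := by
        rw [Real.rpow_sub hR, Real.rpow_one]
      have h2 : R ^ α / R = R ^ α * (1 / R) := by ring
      have h3 : 1 / R ≤ τ / r₀ := by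
        rw [div_le_div_iff₀ hR hr₀0]
        nlinarith
      rw [h1, h2]
      calc R ^ α * (1 / R) ≤ R ^ α * (τ / r₀) :=
            mul_le_mul_of_nonneg_left h3 (Real.rpow_nonneg hR.le _)
      _ = (τ / r₀) * R ^ α := by ring
    -- bound |w|^{α-1}
    have hc₃0 : 0 < r₀ / (2 * Real.pi) := by positivity
    have hc₃1 : r₀ / (2 * Real.pi) ≤ 1 := by
      rw [div_le_one (by positivity)]
      nlinarith
    have hw_bd : Complex.abs w ^ (α - 1) ≤ (2 * Real.pi / r₀) * (τ * (R ^ α / r₀)) := by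
      have hb1 : Complex.abs w ^ (α - 1) ≤ (r₀ / (2 * Real.pi) / τ) ^ (α - 1) :=
        Real.rpow_le_rpow_of_nonpos (by positivity) hw_lb (by linarith)
      have hb2 : (r₀ / (2 * Real.pi) / τ) ^ (α - 1)
          = (r₀ / (2 * Real.pi)) ^ (α - 1) * τ ^ (1 - α) := by
        rw [Real.div_rpow hc₃0.le hτ.le, div_eq_mul_inv, ← Real.rpow_neg hτ.le,
          show -(α - 1) = 1 - α by ring]
      have hb3 : (r₀ / (2 * Real.pi)) ^ (α - 1) ≤ 2 * Real.pi / r₀ := by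
        calc (r₀ / (2 * Real.pi)) ^ (α - 1) ≤ (r₀ / (2 * Real.pi)) ^ (-1 : ℝ) :=
              Real.rpow_le_rpow_of_exponent_ge hc₃0 hc₃1 (by linarith)
        _ = (r₀ / (2 * Real.pi))⁻¹ := Real.rpow_neg_one _
        _ = 2 * Real.pi / r₀ := by rw [inv_div]
      have hb4 : τ ^ (1 - α) ≤ τ * (R ^ α / r₀) := by
        have e1 : τ ^ (1 - α) = τ * τ ^ (-α) := by
          rw [show (1:ℝ) - α = 1 + (-α) by ring, Real.rpow_add hτ, Real.rpow_one]
        have e2 : τ ^ (-α) = (τ⁻¹) ^ α := by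
          rw [Real.rpow_neg hτ.le, Real.inv_rpow hτ.le]
        have e3 : τ⁻¹ ≤ R / r₀ := by
          rw [inv_eq_one_div, div_le_div_iff₀ hτ hr₀0]
          nlinarith
        have e4 : (τ⁻¹) ^ α ≤ (R / r₀) ^ α :=
          Real.rpow_le_rpow (by positivity) e3 hα0.le
        have e5 : (R / r₀) ^ α = R ^ α / r₀ ^ α := Real.div_rpow hR.le hr₀0.le α
        have e6 : r₀ ≤ r₀ ^ α := by
          calc r₀ = r₀ ^ (1:ℝ) := (Real.rpow_one _).symm
          _ ≤ r₀ ^ α := Real.rpow_le_rpow_of_exponent_ge hr₀0 (by linarith) (by linarith)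
        have e7 : R ^ α / r₀ ^ α ≤ R ^ α / r₀ :=
          div_le_div_of_nonneg_left (Real.rpow_nonneg hR.le _) hr₀0 e6
        have e8 : (τ⁻¹) ^ α ≤ R ^ α / r₀ := by
          calc (τ⁻¹) ^ α ≤ (R / r₀) ^ α := e4
          _ = R ^ α / r₀ ^ α := e5
          _ ≤ R ^ α / r₀ := e7
        calc τ ^ (1 - α) = τ * τ ^ (-α) := e1
        _ = τ * (τ⁻¹) ^ α := by rw [e2]
        _ ≤ τ * (R ^ α / r₀) := mul_le_mul_of_nonneg_left e8 hτ.le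
      calc Complex.abs w ^ (α - 1) ≤ (r₀ / (2 * Real.pi) / τ) ^ (α - 1) := hb1
      _ = (r₀ / (2 * Real.pi)) ^ (α - 1) * τ ^ (1 - α) := hb2
      _ ≤ (2 * Real.pi / r₀) * (τ * (R ^ α / r₀)) := by
          apply mul_le_mul hb3 hb4 (by positivity) (by positivity)
    -- triangle inequality and conclusion
    have htri : Complex.abs
        (z ^ ((α:ℂ) - 1) / (z ^ (α:ℂ) + (lam:ℂ)) - w ^ ((α:ℂ) - 1) / (w ^ (α:ℂ) + (lam:ℂ)))
        ≤ Complex.abs (z ^ ((α:ℂ) - 1)) / Complex.abs (z ^ (α:ℂ) + (lam:ℂ))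
          + Complex.abs (w ^ ((α:ℂ) - 1)) / Complex.abs (w ^ (α:ℂ) + (lam:ℂ)) := by
      rw [sub_eq_add_neg]
      calc Complex.abs _ ≤ _ := Complex.abs.add_le _ _
      _ = _ := by rw [Complex.abs.map_neg, map_div₀, map_div₀]
    calc Complex.abs _ ≤ _ := htri
    _ ≤ R ^ (α - 1) / (K * lam) + Complex.abs w ^ (α - 1) / (K * lam) := by
        apply add_le_add
        · rw [hAabs]
          exact div_le_div₀ (by positivity) le_rfl (by positivity) hp1
        · rw [hBabs]
          exact div_le_div₀ (by positivity) le_rfl (by positivity) hq1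
    _ ≤ ((τ / r₀) * R ^ α) / (K * lam) + ((2 * Real.pi / r₀) * (τ * (R ^ α / r₀))) / (K * lam) := by
        apply add_le_add
        · exact div_le_div₀ (by positivity) hz_bd (by positivity) le_rfl
        · exact div_le_div₀ (by positivity) hw_bd (by positivity) le_rfl
    _ = ((1 / r₀ + 2 * Real.pi / r₀ ^ 2) / K) * (τ * lam⁻¹ * R ^ α) := by
        field_simp
    _ ≤ (2 / K + 4 / K ^ 2 + (1 / r₀ + 2 * Real.pi / r₀ ^ 2) / K) * τ * lam⁻¹ * R ^ α := by
        have h1 : 0 ≤ (2 / K + 4 / K ^ 2) * (τ * lam⁻¹ * R ^ α) := by positivity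
        nlinarith [h1]
end

section
/- Let α ∈ (0,1), t_n = nτ with n ≥ 1, θ ∈ (π/2,π), and c, β constants with cos θ < 0. Then the truncated tail integral satisfies ∫_{π/(τ sin θ)}^∞ e^{ρ cos θ · t_n} ρ^{α-1} dρ ≤ C t_n^{-α} n^{-1} for a constant C depending only on α and θ. -/
open MeasureTheory

private lemma exp_tail_integral (a b : ℝ) (hb : 0 < b) :
    ∫ x in Set.Ioi a, Real.exp (-(b * x)) = Real.exp (-(b * a)) / b := by
  have h := MeasureTheory.integral_comp_mul_left_Ioi (fun x => Real.exp (-x)) a hb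
  simp only [smul_eq_mul] at h
  rw [h, integral_exp_neg_Ioi]
  ring

/-- Tail estimate for the truncated contour integral: for `t_n = nτ`, `n ≥ 1`,
`∫_{π/(τ sin θ)}^∞ e^{ρ cos θ · t_n} ρ^{α-1} dρ ≤ C t_n^{-α} n⁻¹`. -/
theorem contour_tail_estimate (α θ : ℝ) (hα : α ∈ Set.Ioo (0 : ℝ) 1)
    (hθ : θ ∈ Set.Ioo (Real.pi / 2) Real.pi) :
    ∃ C : ℝ, 0 < C ∧
      ∀ τ : ℝ, 0 < τ → ∀ n : ℕ, 1 ≤ n →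
        (∫ ρ in Set.Ioi (Real.pi / (τ * Real.sin θ)),
            Real.exp (ρ * Real.cos θ * (n * τ)) * ρ ^ (α - 1))
          ≤ C * ((n : ℝ) * τ) ^ (-α) * (n : ℝ)⁻¹ := by
  obtain ⟨hα0, hα1⟩ := hα
  obtain ⟨hθ1, hθ2⟩ := hθ
  have hπ : (0:ℝ) < Real.pi := Real.pi_pos
  have hS : 0 < Real.sin θ :=
    Real.sin_pos_of_pos_of_lt_pi (lt_trans (by positivity) hθ1) hθ2
  have hcos : Real.cos θ < 0 :=
    Real.cos_neg_of_pi_div_two_lt_of_lt hθ1 (by linarith)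
  set c' : ℝ := -Real.cos θ with hc'
  have hc'0 : 0 < c' := by simp [hc']; linarith
  set c : ℝ := Real.pi / Real.sin θ with hc
  have hc0 : 0 < c := by positivity
  refine ⟨c ^ (α - 1) / (c' ^ 2 * c), by positivity, ?_⟩
  intro τ hτ n hn
  have hn0 : (0:ℝ) < n := by exact_mod_cast hn
  set t : ℝ := (n : ℝ) * τ with ht
  have ht0 : 0 < t := by positivity
  set a : ℝ := Real.pi / (τ * Real.sin θ) with haa
  have ha0 : 0 < a := by positivity
  set k : ℝ := c' * t with hk
  have hk0 : 0 < k := by positivity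
  -- key relations
  have hka : k * a = c' * c * n := by
    rw [hk, haa, ht, hc]
    field_simp
  have ha_eq : a = c * n / t := by
    rw [haa, ht, hc]
    field_simp
  -- pointwise bound on Ioi a
  have hpt : ∀ ρ ∈ Set.Ioi a,
      Real.exp (ρ * Real.cos θ * t) * ρ ^ (α - 1)
        ≤ a ^ (α - 1) * Real.exp (-(k * ρ)) := by
    intro ρ hρ
    have hρa : a < ρ := hρ
    have h1 : ρ * Real.cos θ * t = -(k * ρ) := by rw [hk, hc']; ring
    rw [h1, mul_comm (a ^ (α - 1))]
    exact mul_le_mul_of_nonneg_left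
      (Real.rpow_le_rpow_of_nonpos ha0 hρa.le (by linarith)) (Real.exp_pos _).le
  -- integrability of the dominating function
  have hgint : IntegrableOn (fun ρ => a ^ (α - 1) * Real.exp (-(k * ρ)))
      (Set.Ioi a) := by
    simpa [neg_mul, IntegrableOn] using (exp_neg_integrableOn_Ioi a hk0).const_mul (a ^ (α - 1))
  -- integrability of the integrand
  have hfmeas : AEStronglyMeasurable
      (fun ρ => Real.exp (ρ * Real.cos θ * t) * ρ ^ (α - 1))
      (volume.restrict (Set.Ioi a)) := by
    apply Measurable.aestronglyMeasurable
    fun_prop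
  have hfint : IntegrableOn
      (fun ρ => Real.exp (ρ * Real.cos θ * t) * ρ ^ (α - 1)) (Set.Ioi a) := by
    refine hgint.mono' hfmeas ?_
    filter_upwards [ae_restrict_mem measurableSet_Ioi] with ρ hρ
    have h0 : 0 ≤ Real.exp (ρ * Real.cos θ * t) * ρ ^ (α - 1) := by
      have : (0:ℝ) < ρ := lt_trans ha0 hρ
      positivity
    rw [Real.norm_eq_abs, abs_of_nonneg h0]
    exact hpt ρ hρ
  -- compare integrals
  have hle : (∫ ρ in Set.Ioi a, Real.exp (ρ * Real.cos θ * t) * ρ ^ (α - 1))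
      ≤ ∫ ρ in Set.Ioi a, a ^ (α - 1) * Real.exp (-(k * ρ)) :=
    setIntegral_mono_on hfint hgint measurableSet_Ioi hpt
  have hval : (∫ ρ in Set.Ioi a, a ^ (α - 1) * Real.exp (-(k * ρ)))
      = a ^ (α - 1) * (Real.exp (-(k * a)) / k) := by
    rw [integral_const_mul, exp_tail_integral a k hk0]
  refine le_trans hle ?_
  rw [hval]
  -- arithmetic estimate
  have hexp : Real.exp (-(k * a)) ≤ (c' * c * n)⁻¹ := by
    rw [hka, Real.exp_neg]
    have h1 : c' * c * n ≤ Real.exp (c' * c * n) := by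
      have := Real.add_one_le_exp (c' * c * n)
      linarith
    have h2 : 0 < c' * c * (n:ℝ) := by positivity
    exact inv_anti₀ h2 h1
  have hapow : a ^ (α - 1) = (c * n) ^ (α - 1) * t ^ (1 - α) := by
    rw [ha_eq, Real.div_rpow (by positivity) ht0.le, div_eq_mul_inv,
      ← Real.rpow_neg ht0.le, neg_sub]
  have hcn : (c * (n:ℝ)) ^ (α - 1) ≤ c ^ (α - 1) := by
    rw [Real.mul_rpow hc0.le hn0.le]
    have : (n:ℝ) ^ (α - 1) ≤ 1 := by
      have one_le : (1:ℝ) ≤ (n:ℝ) := by exact_mod_cast hn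
      calc (n:ℝ) ^ (α - 1) ≤ (n:ℝ) ^ (0:ℝ) :=
            Real.rpow_le_rpow_of_exponent_le one_le (by linarith)
        _ = 1 := Real.rpow_zero _
    calc c ^ (α - 1) * (n:ℝ) ^ (α - 1) ≤ c ^ (α - 1) * 1 := by
          gcongr
      _ = c ^ (α - 1) := mul_one _
  have htpow : t ^ (1 - α) * t⁻¹ = t ^ (-α) := by
    rw [← Real.rpow_neg_one t, ← Real.rpow_add ht0]
    congr 1
    ring
  calc a ^ (α - 1) * (Real.exp (-(k * a)) / k)
      = (c * n) ^ (α - 1) * t ^ (1 - α) * (Real.exp (-(k * a)) / (c' * t)) := by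
        rw [hapow, hk]
    _ ≤ c ^ (α - 1) * t ^ (1 - α) * ((c' * c * n)⁻¹ / (c' * t)) := by
        gcongr ?_ * _ * (?_ / _)
    _ = c ^ (α - 1) / (c' ^ 2 * c) * t ^ (-α) * (n:ℝ)⁻¹ := by
        rw [← htpow]; field_simp
end

section
/- Let α ∈ (0,1), and suppose the numbers F_τ^n(λ) (λ > 0, 1 ≤ n ≤ N, t_n = nτ) satisfy the two-sided bound c₀/(1+λ t_n^α) ≤ F_τ^n(λ) ≤ c₁/(1+λ t_n^α) with c₀, c₁ > 0, and F_τ^0(λ) = 1. Then for any γ > 0 and T = t_N, F_τ^n(λ)/(γ + F_τ^N(λ)) ≤ C min(γ^{-1}, t_n^{-α}) for all 0 ≤ n ≤ N and all λ > 0, where C depends only on c₀, c₁, T. -/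
/-- Discrete regularized-symbol bound (Corollary 4.2): if the discrete solution symbol
`F_τ^n(λ)` satisfies the two-sided bound `c₀/(1+λ t_n^α) ≤ F_τ^n(λ) ≤ c₁/(1+λ t_n^α)` for
`1 ≤ n ≤ N` and `F_τ^0(λ) = 1`, then `F_τ^n(λ)/(γ + F_τ^N(λ)) ≤ C min(γ⁻¹, t_n^{-α})`
for all `0 ≤ n ≤ N` (the bound `t_n^{-α}` being understood for `n ≥ 1`), where `C` depends
only on `c₀`, `c₁`, `T = Nτ`. -/
theorem discrete_regularized_symbol_bound (α τ : ℝ) (hα : α ∈ Set.Ioo (0 : ℝ) 1)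
    (hτ : 0 < τ) (N : ℕ) (hN : 1 ≤ N) (c₀ c₁ : ℝ) (hc₀ : 0 < c₀) (hc₁ : 0 < c₁)
    (F : ℝ → ℕ → ℝ)
    (hF0 : ∀ lam : ℝ, 0 < lam → F lam 0 = 1)
    (hFbound : ∀ lam : ℝ, 0 < lam → ∀ n : ℕ, 1 ≤ n → n ≤ N →
      c₀ / (1 + lam * ((n : ℝ) * τ) ^ α) ≤ F lam n ∧
      F lam n ≤ c₁ / (1 + lam * ((n : ℝ) * τ) ^ α)) :
    ∃ C : ℝ, 0 < C ∧
      ∀ γ : ℝ, 0 < γ → ∀ lam : ℝ, 0 < lam → ∀ n : ℕ, n ≤ N →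
        F lam n / (γ + F lam N) ≤ C * γ⁻¹ ∧
        (1 ≤ n → F lam n / (γ + F lam N) ≤ C * min γ⁻¹ (((n : ℝ) * τ) ^ (-α))) := by
  obtain ⟨hα0, hα1⟩ := hα
  have hNpos : (0:ℝ) < (N:ℝ) := by exact_mod_cast Nat.pos_of_ne_zero (by omega)
  set T : ℝ := (N : ℝ) * τ with hTdef
  have hTpos : 0 < T := by positivity
  have hTα : 0 < T ^ α := Real.rpow_pos_of_pos hTpos α
  set C : ℝ := max (max 1 c₁) (c₁ / c₀ * T ^ α) with hCdef
  have hC1 : (1:ℝ) ≤ C := le_trans (le_max_left 1 c₁) (le_max_left _ _)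
  have hCpos : 0 < C := lt_of_lt_of_le one_pos hC1
  refine ⟨C, hCpos, ?_⟩
  intro γ hγ lam hlam n hnN
  have hFN := hFbound lam hlam N hN le_rfl
  have hBpos : 0 < 1 + lam * T ^ α := by positivity
  have hFNpos : 0 < F lam N := lt_of_lt_of_le (by positivity) hFN.1
  have hden : 0 < γ + F lam N := by linarith
  have hFnonneg : 0 ≤ F lam n := by
    rcases Nat.eq_zero_or_pos n with h0 | h1
    · rw [h0, hF0 lam hlam]; norm_num
    · have htn : (0:ℝ) < (n:ℝ) * τ := by
        have : (0:ℝ) < (n:ℝ) := by exact_mod_cast h1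
        positivity
      exact le_of_lt (lt_of_lt_of_le (by positivity) (hFbound lam hlam n h1 hnN).1)
  have hFle : F lam n ≤ max 1 c₁ := by
    rcases Nat.eq_zero_or_pos n with h0 | h1
    · rw [h0, hF0 lam hlam]; exact le_max_left _ _
    · have htn : (0:ℝ) < (n:ℝ) * τ := by
        have : (0:ℝ) < (n:ℝ) := by exact_mod_cast h1
        positivity
      have hA1 : (1:ℝ) ≤ 1 + lam * ((n:ℝ) * τ) ^ α := by
        have : 0 < ((n:ℝ) * τ) ^ α := Real.rpow_pos_of_pos htn α
        nlinarith
      calc F lam n ≤ c₁ / (1 + lam * ((n:ℝ) * τ) ^ α) := (hFbound lam hlam n h1 hnN).2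
        _ ≤ c₁ := div_le_self hc₁.le hA1
        _ ≤ max 1 c₁ := le_max_right _ _
  have part1 : F lam n / (γ + F lam N) ≤ C * γ⁻¹ := by
    have h1 : F lam n / (γ + F lam N) ≤ max 1 c₁ / γ :=
      div_le_div₀ (le_trans zero_le_one (le_max_left 1 c₁)) hFle hγ (by linarith)
    calc F lam n / (γ + F lam N) ≤ max 1 c₁ / γ := h1
      _ ≤ C / γ := by gcongr; exact le_max_left _ _
      _ = C * γ⁻¹ := div_eq_mul_inv C γ
  refine ⟨part1, fun h1 => ?_⟩
  have htn : (0:ℝ) < (n:ℝ) * τ := by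
    have : (0:ℝ) < (n:ℝ) := by exact_mod_cast h1
    positivity
  have htnT : (n:ℝ) * τ ≤ T := by
    have : (n:ℝ) ≤ (N:ℝ) := by exact_mod_cast hnN
    rw [hTdef]; nlinarith
  set a : ℝ := ((n:ℝ) * τ) ^ α with hadef
  have hapos : 0 < a := Real.rpow_pos_of_pos htn α
  have hab : a ≤ T ^ α := Real.rpow_le_rpow htn.le htnT hα0.le
  have hApos : 0 < 1 + lam * a := by positivity
  have part2 : F lam n / (γ + F lam N) ≤ C * (((n:ℝ) * τ) ^ (-α)) := by
    have key1 : F lam n / (γ + F lam N) ≤ F lam n / F lam N := by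
      gcongr <;> linarith
    have key2 : F lam n / F lam N ≤ (c₁ / (1 + lam * a)) / (c₀ / (1 + lam * T ^ α)) :=
      div_le_div₀ (by positivity) (hFbound lam hlam n h1 hnN).2 (by positivity) hFN.1
    have key3 : (c₁ / (1 + lam * a)) / (c₀ / (1 + lam * T ^ α)) ≤ (c₁ / c₀ * T ^ α) * a⁻¹ := by
      have e1 : (c₁ / (1 + lam * a)) / (c₀ / (1 + lam * T ^ α))
          = c₁ * (1 + lam * T ^ α) / (c₀ * (1 + lam * a)) := by
        field_simp
      have e2 : (c₁ / c₀ * T ^ α) * a⁻¹ = c₁ * T ^ α / (c₀ * a) := by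
        field_simp
      rw [e1, e2, div_le_div_iff₀ (by positivity) (by positivity)]
      nlinarith [mul_le_mul_of_nonneg_left hab (mul_pos hc₁ hc₀).le,
        mul_pos (mul_pos hc₁ hc₀) (mul_pos hlam hTα)]
    have hrw : ((n:ℝ) * τ) ^ (-α) = a⁻¹ := Real.rpow_neg htn.le α
    rw [hrw]
    calc F lam n / (γ + F lam N) ≤ (c₁ / (1 + lam * a)) / (c₀ / (1 + lam * T ^ α)) :=
          le_trans key1 key2
      _ ≤ (c₁ / c₀ * T ^ α) * a⁻¹ := key3
      _ ≤ C * a⁻¹ := by gcongr; exact le_max_right _ _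
  have hmin : C * min γ⁻¹ (((n:ℝ) * τ) ^ (-α)) = min (C * γ⁻¹) (C * (((n:ℝ) * τ) ^ (-α))) :=
    mul_min_of_nonneg _ _ hCpos.le
  rw [hmin]
  exact le_min part1 part2
end
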